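/- arXiv:1406.5311 — 8 statements merged into one kernel-verified Lean document; each statement's English description precedes it below -/
import Mathlib

section
/- Let A be a d×n real matrix with columns a_1,...,a_n. If the margin ρ = sup_{‖w‖=1} min_i ⟨w, a_i⟩ is strictly positive, then ρ equals the Euclidean distance from the origin to the convex hull of {a_1,...,a_n}, i.e. ρ = inf_{p ∈ Δ} ‖A p‖, where Δ is the probability simplex in ℝⁿ. -/
/-!
Weak duality: for a unit vector `w` and `p ∈ Δ`, `min_i ⟪w, a i⟫ ≤ ⟪w, A p⟫ ≤ ‖A p‖`.
Conversely, let `v = A p` be the point of least norm of the compact convex set `A Δ`, the convex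
hull of the columns. The first-order optimality condition of this projection gives
`‖v‖² ≤ ⟪v, a i⟫` for every column; since `ρ > 0` forces `v ≠ 0`, the unit vector `v / ‖v‖`
attains margin at least `‖v‖`.
-/

open Set Finset RealInnerProductSpace

section

variable {E : Type*} [NormedAddCommGroup E] [InnerProductSpace ℝ E]

theorem IsMinOn.sq_norm_le_inner {K : Set E} (hK : Convex ℝ K) {v : E} (hv : v ∈ K)
    (hmin : IsMinOn (‖·‖) K v) {y : E} (hy : y ∈ K) : ‖v‖ ^ 2 ≤ ⟪v, y⟫ := by
  have hproj : ‖0 - v‖ = ⨅ w : K, ‖0 - (w : E)‖ := by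
    simpa only [zero_sub, norm_neg] using (hmin.iInf_eq hv).symm
  have := (norm_eq_iInf_iff_real_inner_le_zero hK hv).1 hproj y hy
  rw [zero_sub, inner_neg_left, inner_sub_right, real_inner_self_eq_norm_sq] at this
  linarith

variable {ι : Type*} [Fintype ι] (a : ι → E)

noncomputable def margin : ℝ := ⨆ w : {w : E // ‖w‖ = 1}, ⨅ i, ⟪(w : E), a i⟫

theorem iInf_inner_le_norm_sum_smul {w : E} (hw : ‖w‖ = 1) {p : ι → ℝ}
    (hp : p ∈ stdSimplex ℝ ι) : ⨅ i, ⟪w, a i⟫ ≤ ‖∑ i, p i • a i‖ :=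
  calc ⨅ i, ⟪w, a i⟫ = ∑ i, p i * ⨅ j, ⟪w, a j⟫ := by rw [← Finset.sum_mul, hp.2, one_mul]
    _ ≤ ∑ i, p i * ⟪w, a i⟫ := by
      gcongr with i
      · exact hp.1 i
      · exact ciInf_le (Finite.bddBelow_range _) i
    _ = ⟪w, ∑ i, p i • a i⟫ := by simp only [inner_sum, real_inner_smul_right]
    _ ≤ ‖w‖ * ‖∑ i, p i • a i‖ := real_inner_le_norm _ _
    _ = ‖∑ i, p i • a i‖ := by rw [hw, one_mul]

theorem margin_le_norm_sum_smul [Nonempty {w : E // ‖w‖ = 1}] {p : ι → ℝ}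
    (hp : p ∈ stdSimplex ℝ ι) : margin a ≤ ‖∑ i, p i • a i‖ :=
  ciSup_le fun w => iInf_inner_le_norm_sum_smul a w.2 hp

theorem bddAbove_iInf_inner [Nonempty ι] :
    BddAbove (range fun w : {w : E // ‖w‖ = 1} => ⨅ i, ⟪(w : E), a i⟫) := by
  obtain ⟨i⟩ := ‹Nonempty ι›
  refine ⟨‖a i‖, ?_⟩
  rintro _ ⟨w, rfl⟩
  calc ⨅ j, ⟪(w : E), a j⟫ ≤ ⟪(w : E), a i⟫ := ciInf_le (Finite.bddBelow_range _) i
    _ ≤ ‖(w : E)‖ * ‖a i‖ := real_inner_le_norm _ _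
    _ = ‖a i‖ := by rw [w.2, one_mul]

theorem norm_le_margin [Nonempty ι] {v : E} (hv : v ≠ 0) (hva : ∀ i, ‖v‖ ^ 2 ≤ ⟪v, a i⟫) :
    ‖v‖ ≤ margin a := by
  have hv' : 0 < ‖v‖ := norm_pos_iff.2 hv
  let w : {w : E // ‖w‖ = 1} :=
    ⟨‖v‖⁻¹ • v, by rw [norm_smul, norm_inv, norm_norm, inv_mul_cancel₀ hv'.ne']⟩
  refine le_trans (le_ciInf fun i => ?_) (le_ciSup (bddAbove_iInf_inner a) w)
  calc ‖v‖ = ‖v‖⁻¹ * ‖v‖ ^ 2 := by field_simp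
    _ ≤ ‖v‖⁻¹ * ⟪v, a i⟫ := by gcongr; exact hva i
    _ = ⟪(w : E), a i⟫ := (real_inner_smul_left _ _ _).symm

theorem exists_isMinOn_norm_sum_smul [Nonempty ι] :
    ∃ p ∈ stdSimplex ℝ ι, IsMinOn (fun q => ‖∑ i, q i • a i‖) (stdSimplex ℝ ι) p :=
  (isCompact_stdSimplex ℝ ι).exists_isMinOn (Set.nonempty_coe_sort.1 inferInstance)
    (by fun_prop)

theorem sq_norm_le_inner_of_isMinOn {p : ι → ℝ} (hp : p ∈ stdSimplex ℝ ι)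
    (hmin : IsMinOn (fun q => ‖∑ i, q i • a i‖) (stdSimplex ℝ ι) p) (i : ι) :
    ‖∑ j, p j • a j‖ ^ 2 ≤ ⟪∑ j, p j • a j, a i⟫ := by
  classical
  let A := Fintype.linearCombination ℝ a
  have hA (q : ι → ℝ) : A q = ∑ j, q j • a j := Fintype.linearCombination_apply ℝ a q
  refine IsMinOn.sq_norm_le_inner ((convex_stdSimplex ℝ ι).linear_image A) ⟨p, hp, hA p⟩ ?_ ?_
  · rintro _ ⟨q, hq, rfl⟩
    simpa [hA] using hmin hq
  · exact ⟨Pi.single i 1, single_mem_stdSimplex ℝ i, by simp [hA, Pi.single_apply]⟩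

theorem margin_eq_iInf_norm_sum_smul (hpos : 0 < margin a) :
    margin a = ⨅ p : stdSimplex ℝ ι, ‖∑ i, (p : ι → ℝ) i • a i‖ := by
  have : Nonempty ι := by
    by_contra! h
    simp [margin] at hpos
  have : Nonempty {w : E // ‖w‖ = 1} := by
    by_contra! h
    simp [margin] at hpos
  obtain ⟨p, hp, hmin⟩ := exists_isMinOn_norm_sum_smul a
  have hle := margin_le_norm_sum_smul a hp
  have hv : ∑ i, p i • a i ≠ 0 := norm_pos_iff.1 (hpos.trans_le hle)
  exact (le_antisymm hle (norm_le_margin a hv (sq_norm_le_inner_of_isMinOn a hp hmin))).trans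
    (hmin.iInf_eq hp).symm

end

theorem stmt_0_general {d n : ℕ} (a : Fin n → EuclideanSpace ℝ (Fin d))
    (ρ : ℝ)
    (hρ : ρ = ⨆ w : {w : EuclideanSpace ℝ (Fin d) // ‖w‖ = 1},
      ⨅ i : Fin n, (inner ℝ (w : EuclideanSpace ℝ (Fin d)) (a i) : ℝ))
    (hpos : 0 < ρ) :
    ρ = ⨅ p : {p : Fin n → ℝ // (∀ i, 0 ≤ p i) ∧ ∑ i, p i = 1},
      ‖∑ i, (p : Fin n → ℝ) i • a i‖ := by
  subst hρ
  exact margin_eq_iInf_norm_sum_smul a hpos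

/-- If the margin `ρ = sup_{‖w‖=1} inf_i ⟪w, a i⟫` is strictly positive, then it equals
the distance from the origin to the convex hull of the columns, `inf_{p ∈ Δ} ‖A p‖`. -/
theorem stmt_0 {d n : ℕ} (hn : 0 < n) (a : Fin n → EuclideanSpace ℝ (Fin d))
    (ρ : ℝ)
    (hρ : ρ = ⨆ w : {w : EuclideanSpace ℝ (Fin d) // ‖w‖ = 1},
      ⨅ i : Fin n, (inner ℝ (w : EuclideanSpace ℝ (Fin d)) (a i) : ℝ))
    (hpos : 0 < ρ) :
    ρ = ⨅ p : {p : Fin n → ℝ // (∀ i, 0 ≤ p i) ∧ ∑ i, p i = 1},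
      ‖∑ i, (p : Fin n → ℝ) i • a i‖ :=
  stmt_0_general a ρ hρ hpos
end

section
/- Let A ∈ ℝ^{d×n} with columns a_i, G = AᵀA, and affine margin ρ_A := sup_{w ∈ lin(A), ‖w‖=1} inf_{p∈Δ} ⟨w, Ap⟩. If ρ_A ≤ 0, then |ρ_A| = sup { R ≥ 0 : for all α ∈ ℝⁿ with ‖Aα‖ ≤ R, Aα ∈ conv{a_1,...,a_n} }, i.e. |ρ_A| is the radius of the largest ball in lin(A) centered at the origin contained in conv(A). -/
/-!
Every point `y` of `conv(a)` satisfies `min_i ⟨w, a i⟩ ≤ ⟨w, y⟩`; applied to `y = -R • w` for a unit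
vector `w ∈ lin(a)` this bounds every inscribed radius `R` by `-ρ_A`. Conversely, a point
`x ∈ lin(a)` outside `conv(a)` is separated from it by the unit vector `w` pointing from `x` to its
nearest point `p` in `conv(a)`. Since `w ∈ lin(a)`,
`ρ_A ≥ min_i ⟨w, a i⟩ ≥ ⟨w, p⟩ > ⟨w, x⟩ ≥ -‖x‖`, so the ball of radius `-ρ_A` lies in `conv(a)`.
-/

open Set
open scoped RealInnerProductSpace

section

variable {E ι : Type*} [NormedAddCommGroup E] [InnerProductSpace ℝ E]

noncomputable def affineMargin (a : ι → E) : ℝ :=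
  ⨆ w : {w : E // w ∈ Submodule.span ℝ (range a) ∧ ‖w‖ = 1}, ⨅ i, ⟪(w : E), a i⟫

def inscribedRadii [Fintype ι] (a : ι → E) : Set ℝ :=
  {R | 0 ≤ R ∧ ∀ α : ι → ℝ, ‖∑ i, α i • a i‖ ≤ R → ∑ i, α i • a i ∈ convexHull ℝ (range a)}

theorem iInf_inner_le_inner_of_mem_convexHull [Finite ι] {a : ι → E} (w : E) {y : E}
    (hy : y ∈ convexHull ℝ (range a)) : ⨅ i, ⟪w, a i⟫ ≤ ⟪w, y⟫ := by
  obtain ⟨_, ⟨i, rfl⟩, hi⟩ :=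
    ((innerₛₗ ℝ w).concaveOn convex_univ).exists_le_of_mem_convexHull (subset_univ _) hy
  exact (ciInf_le (finite_range _).bddBelow i).trans hi

theorem iInf_inner_le_affineMargin [Finite ι] [Nonempty ι] {a : ι → E} {w : E}
    (hw : w ∈ Submodule.span ℝ (range a)) (hw₁ : ‖w‖ = 1) :
    ⨅ i, ⟪w, a i⟫ ≤ affineMargin a := by
  obtain ⟨i₀⟩ := ‹Nonempty ι›
  refine le_ciSup (f := fun w : {w : E // w ∈ Submodule.span ℝ (range a) ∧ ‖w‖ = 1} =>
    ⨅ i, ⟪(w : E), a i⟫) ⟨‖a i₀‖, ?_⟩ ⟨w, hw, hw₁⟩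
  rintro _ ⟨⟨v, -, hv₁⟩, rfl⟩
  calc ⨅ i, ⟪v, a i⟫ ≤ ⟪v, a i₀⟫ := ciInf_le (finite_range _).bddBelow _
    _ ≤ ‖v‖ * ‖a i₀‖ := real_inner_le_norm _ _
    _ = ‖a i₀‖ := by rw [hv₁, one_mul]

theorem mem_convexHull_of_mem_span_of_norm_le [Finite ι] [Nonempty ι] {a : ι → E} {x : E}
    (hx : x ∈ Submodule.span ℝ (range a)) (hxr : ‖x‖ ≤ -affineMargin a) :
    x ∈ convexHull ℝ (range a) := by
  by_contra hxC
  have hC : IsCompact (convexHull ℝ (range a)) := (finite_range a).isCompact_convexHull (𝕜 := ℝ)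
  obtain ⟨p, hpC, hp⟩ := exists_norm_eq_iInf_of_complete_convex
    ((range_nonempty a).convexHull (𝕜 := ℝ)) hC.isComplete (convex_convexHull ℝ _) x
  have hsep := (norm_eq_iInf_iff_real_inner_le_zero (convex_convexHull ℝ _) hpC).1 hp
  have hpx : p - x ≠ 0 := sub_ne_zero.2 fun h => hxC (h ▸ hpC)
  have hv : 0 < ‖p - x‖ := norm_pos_iff.2 hpx
  set w := (‖p - x‖⁻¹ : ℝ) • (p - x)
  have hw₁ : ‖w‖ = 1 := norm_smul_inv_norm hpx
  have hwK : w ∈ Submodule.span ℝ (range a) :=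
    Submodule.smul_mem _ _ <| Submodule.sub_mem _
      (convexHull_min Submodule.subset_span (Submodule.convex _) hpC) hx
  have hpa : ∀ i, ⟪w, p⟫ ≤ ⟪w, a i⟫ := fun i => by
    have := hsep _ (subset_convexHull ℝ _ ⟨i, rfl⟩)
    rw [← neg_sub p x, inner_neg_left, neg_nonpos] at this
    rw [← sub_nonneg, ← inner_sub_right, real_inner_smul_left]
    exact mul_nonneg (inv_nonneg.2 hv.le) this
  have hxp : ⟪w, x⟫ < ⟪w, p⟫ := by
    have : ⟪w, p⟫ - ⟪w, x⟫ = ‖p - x‖ := by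
      rw [← inner_sub_right, real_inner_smul_left, real_inner_self_eq_norm_sq]
      field_simp
    linarith
  have hx' : -‖x‖ ≤ ⟪w, x⟫ := by
    have := real_inner_le_norm w (-x)
    rw [inner_neg_right, hw₁, norm_neg, one_mul] at this
    linarith
  have := (le_ciInf hpa).trans (iInf_inner_le_affineMargin hwK hw₁)
  linarith

theorem neg_affineMargin_mem_inscribedRadii [Fintype ι] [Nonempty ι] {a : ι → E}
    (h : affineMargin a ≤ 0) : -affineMargin a ∈ inscribedRadii a :=
  ⟨neg_nonneg.2 h, fun α hα => mem_convexHull_of_mem_span_of_norm_le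
    ((Submodule.mem_span_range_iff_exists_fun ℝ).2 ⟨α, rfl⟩) hα⟩

theorem le_neg_affineMargin_of_mem_inscribedRadii [Fintype ι] {a : ι → E}
    [Nonempty {w : E // w ∈ Submodule.span ℝ (range a) ∧ ‖w‖ = 1}] {R : ℝ}
    (hR : R ∈ inscribedRadii a) : R ≤ -affineMargin a := by
  rw [le_neg, affineMargin]
  refine ciSup_le fun ⟨w, hwK, hw₁⟩ => ?_
  obtain ⟨α, hα⟩ :=
    (Submodule.mem_span_range_iff_exists_fun ℝ).1 (Submodule.smul_mem _ (-R) hwK)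
  have hαC := hR.2 α <| by
    rw [hα, norm_smul, hw₁, mul_one, Real.norm_eq_abs, abs_neg, abs_of_nonneg hR.1]
  rw [hα] at hαC
  calc ⨅ i, ⟪w, a i⟫ ≤ ⟪w, (-R) • w⟫ := iInf_inner_le_inner_of_mem_convexHull w hαC
    _ = -R := by rw [real_inner_smul_right, real_inner_self_eq_norm_sq, hw₁]; ring

theorem eq_zero_of_isEmpty_unitSphere {a : ι → E}
    [IsEmpty {w : E // w ∈ Submodule.span ℝ (range a) ∧ ‖w‖ = 1}] : a = 0 := by
  funext i
  by_contra h
  exact IsEmpty.false (α := {w : E // w ∈ Submodule.span ℝ (range a) ∧ ‖w‖ = 1})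
    ⟨(‖a i‖⁻¹ : ℝ) • a i, Submodule.smul_mem _ _ (Submodule.subset_span ⟨i, rfl⟩),
      norm_smul_inv_norm h⟩

theorem inscribedRadii_zero [Fintype ι] [Nonempty ι] : inscribedRadii (0 : ι → E) = Ici 0 := by
  ext R
  simp [inscribedRadii]

theorem abs_affineMargin_eq_sSup_inscribedRadii [Fintype ι] [Nonempty ι] {a : ι → E}
    (h : affineMargin a ≤ 0) : |affineMargin a| = sSup (inscribedRadii a) := by
  rw [abs_of_nonpos h]
  rcases isEmpty_or_nonempty {w : E // w ∈ Submodule.span ℝ (range a) ∧ ‖w‖ = 1} with hS | hS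
  · -- `lin(a) = 0`: both sides are the junk value `0` of a supremum, over `∅` and over `[0, ∞)`.
    rw [affineMargin, Real.iSup_of_isEmpty, neg_zero, eq_zero_of_isEmpty_unitSphere (a := a),
      inscribedRadii_zero, Real.sSup_of_not_bddAbove (not_bddAbove_Ici 0)]
  · have hmem := neg_affineMargin_mem_inscribedRadii h
    exact le_antisymm
      (le_csSup ⟨_, fun _ => le_neg_affineMargin_of_mem_inscribedRadii⟩ hmem)
      (csSup_le ⟨_, hmem⟩ fun _ => le_neg_affineMargin_of_mem_inscribedRadii)

end

/-- If the affine margin `ρ_A ≤ 0`, then `|ρ_A|` is the radius of the largest ball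
in `lin(A)` centered at the origin contained in `conv(A)`. -/
theorem stmt_3 {d n : ℕ} (hn : 0 < n) (a : Fin n → EuclideanSpace ℝ (Fin d))
    (ρA : ℝ)
    (hρA : ρA = ⨆ w : {w : EuclideanSpace ℝ (Fin d) //
        w ∈ Submodule.span ℝ (Set.range a) ∧ ‖w‖ = 1},
      ⨅ i : Fin n, (inner ℝ (w : EuclideanSpace ℝ (Fin d)) (a i) : ℝ))
    (hneg : ρA ≤ 0) :
    |ρA| = sSup {R : ℝ | 0 ≤ R ∧ ∀ α : Fin n → ℝ,
      ‖∑ i, α i • a i‖ ≤ R → (∑ i, α i • a i) ∈ convexHull ℝ (Set.range a)} := by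
  subst hρA
  have : Nonempty (Fin n) := ⟨⟨0, hn⟩⟩
  exact abs_affineMargin_eq_sSup_inscribedRadii hneg
end

section
/- Gordan's theorem with margin (part 2): for any A ∈ ℝ^{d×n} and any γ ≥ 0, either there exists a unit vector w ∈ lin(A) with ⟨w, a_i⟩ > γ for all i, or there exists p ∈ Δ with ‖Ap‖ ≤ γ, and these two alternatives cannot hold simultaneously. -/
/-!
Let `v` be the point of least norm in the convex hull `K` of the `aᵢ`. Since `K` is convex,
`v` satisfies the variational inequality `‖v‖² ≤ ⟪v, x⟫` on `K`. If `‖v‖ ≤ γ`, writing `v` as a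
convex combination of the `aᵢ` gives the second alternative. Otherwise `v ≠ 0`, and the unit vector
`v / ‖v‖`, which lies in the span of the `aᵢ`, has margin `⟪v / ‖v‖, aᵢ⟫ ≥ ‖v‖ > γ`. The two
alternatives exclude each other because a unit vector with margin `γ` on the `aᵢ` has margin `γ`
on their convex hull, so by Cauchy–Schwarz every point of it has norm `> γ`.
-/

open Set
open scoped InnerProductSpace

theorem convexHull_range_eq_image_stdSimplex {R E ι : Type*} [Field R] [LinearOrder R]
    [IsStrictOrderedRing R] [AddCommGroup E] [Module R E] [Fintype ι] (v : ι → E) :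
    convexHull R (range v) = Fintype.linearCombination R v '' stdSimplex R ι := by
  classical
  rw [← convexHull_rangle_single_eq_stdSimplex, LinearMap.image_convexHull, ← range_comp]
  congr with i
  simp [Fintype.linearCombination_apply_single]

section InnerProductSpace

variable {E : Type*} [NormedAddCommGroup E] [InnerProductSpace ℝ E]

theorem lt_norm_of_mem_convexHull {s : Set E} {w y : E} {γ : ℝ} (hw : ‖w‖ ≤ 1)
    (hs : ∀ x ∈ s, γ < ⟪w, x⟫_ℝ) (hy : y ∈ convexHull ℝ s) : γ < ‖y‖ :=
  calc γ < ⟪w, y⟫_ℝ := convexHull_min hs (convex_halfSpace_gt (innerₛₗ ℝ w).isLinear γ) hy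
    _ ≤ ‖w‖ * ‖y‖ := real_inner_le_norm w y
    _ ≤ ‖y‖ := mul_le_of_le_one_left (norm_nonneg y) hw

theorem sq_norm_le_inner_of_isMinOn_norm {K : Set E} (hK : Convex ℝ K) {v : E} (hv : v ∈ K)
    (hmin : IsMinOn (‖·‖) K v) {x : E} (hx : x ∈ K) : ‖v‖ ^ 2 ≤ ⟪v, x⟫_ℝ := by
  have hproj : ‖0 - v‖ = ⨅ y : K, ‖0 - (y : E)‖ := by
    simpa only [zero_sub, norm_neg] using (hmin.iInf_eq hv).symm
  have h := (norm_eq_iInf_iff_real_inner_le_zero hK hv).1 hproj x hx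
  rw [zero_sub, inner_neg_left, inner_sub_right, real_inner_self_eq_norm_sq] at h
  linarith

theorem norm_le_inner_normalize_of_isMinOn_norm {K : Set E} (hK : Convex ℝ K) {v : E}
    (hv : v ∈ K) (hmin : IsMinOn (‖·‖) K v) {x : E} (hx : x ∈ K) :
    ‖v‖ ≤ ⟪‖v‖⁻¹ • v, x⟫_ℝ := by
  rcases eq_or_ne v 0 with rfl | hv0
  · simp
  rw [real_inner_smul_left, le_inv_mul_iff₀ (norm_pos_iff.2 hv0), ← sq]
  exact sq_norm_le_inner_of_isMinOn_norm hK hv hmin hx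

end InnerProductSpace

/-- Gordan's theorem with margin (part 2): for any `γ ≥ 0`, either there is a unit
vector `w ∈ lin(A)` with `⟪w, a i⟫ > γ` for all `i`, or there is `p ∈ Δ` with
`‖Ap‖ ≤ γ`, and the two alternatives cannot hold simultaneously. -/
theorem stmt_5 {d n : ℕ} (hn : 0 < n) (a : Fin n → EuclideanSpace ℝ (Fin d))
    (γ : ℝ) (hγ : 0 ≤ γ) :
    Xor'
      (∃ w : EuclideanSpace ℝ (Fin d), w ∈ Submodule.span ℝ (Set.range a) ∧ ‖w‖ = 1 ∧
        ∀ i, γ < (inner ℝ w (a i) : ℝ))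
      (∃ p : Fin n → ℝ, (∀ i, 0 ≤ p i) ∧ ∑ i, p i = 1 ∧ ‖∑ i, p i • a i‖ ≤ γ) := by
  have ha : ∀ i, a i ∈ convexHull ℝ (range a) := fun i => subset_convexHull ℝ _ (mem_range_self i)
  obtain ⟨v, hvK, hmin⟩ := ((finite_range a).isCompact_convexHull (𝕜 := ℝ)).exists_isMinOn
    ⟨_, ha ⟨0, hn⟩⟩ continuous_norm.continuousOn
  refine (xor_iff_or_and_not_and _ _).2 ⟨?_, fun ⟨⟨w, _, hw, hwa⟩, ⟨p, hp0, hp1, hpγ⟩⟩ => ?_⟩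
  · rcases le_or_gt ‖v‖ γ with hle | hgt
    · rw [convexHull_range_eq_image_stdSimplex] at hvK
      obtain ⟨p, ⟨hp0, hp1⟩, rfl⟩ := hvK
      exact Or.inr ⟨p, hp0, hp1, by rwa [Fintype.linearCombination_apply] at hle⟩
    · have hv0 : v ≠ 0 := norm_pos_iff.1 (hγ.trans_lt hgt)
      refine Or.inl ⟨‖v‖⁻¹ • v, ?_, norm_smul_inv_norm hv0, fun i => hgt.trans_le ?_⟩
      · exact Submodule.smul_mem _ _
          (convexHull_min Submodule.subset_span (Submodule.convex _) hvK)
      · exact norm_le_inner_normalize_of_isMinOn_norm (convex_convexHull ℝ _) hvK hmin (ha i)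
  · exact (lt_norm_of_mem_convexHull hw.le (forall_mem_range.2 hwa)
      (mem_convexHull_of_exists_fintype p a hp0 hp1 mem_range_self rfl)).not_ge hpγ
end

section
/- Gordan's theorem with margin (part 3): for any A ∈ ℝ^{d×n} and any γ ≥ 0, either there exists a unit vector w ∈ lin(A) with ⟨w, a_i⟩ > −γ for all i, or every v ∈ lin(A) with ‖v‖ ≤ γ satisfies v = A p_v for some p_v ∈ Δ (i.e. the ball of radius γ in lin(A) is contained in conv(A)). -/
/-! If some `v ∈ lin(A)` with `‖v‖ ≤ γ` lies outside the compact convex set `conv(A)`, let `u`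
be its nearest point in `conv(A)`. The hyperplane through `u` orthogonal to `u - v` separates
`v` from `conv(A)`, and `u - v ∈ lin(A)`; for the unit vector `w` in that direction,
`⟪w, a i⟫ > ⟪w, v⟫ ≥ -‖v‖ ≥ -γ`. -/

open Set

section Separation

variable {F : Type*} [NormedAddCommGroup F] [InnerProductSpace ℝ F] {K : Set F} {v : F}

theorem exists_forall_inner_sub_lt_of_notMem (hne : K.Nonempty) (hc : IsComplete K)
    (hK : Convex ℝ K) (hv : v ∉ K) :
    ∃ u ∈ K, ∀ x ∈ K, inner ℝ (u - v) v < inner ℝ (u - v) x := by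
  obtain ⟨u, huK, hu⟩ := exists_norm_eq_iInf_of_complete_convex hne hc hK v
  have hproj := (norm_eq_iInf_iff_real_inner_le_zero hK huK).mp hu
  have huv : u - v ≠ 0 := sub_ne_zero.mpr (ne_of_mem_of_not_mem huK hv)
  refine ⟨u, huK, fun x hx => ?_⟩
  have hx_ge : inner ℝ (u - v) u ≤ inner ℝ (u - v) x := by
    have := hproj x hx
    rw [← neg_sub u v, inner_neg_left, inner_sub_right] at this
    linarith
  have hu_gt : inner ℝ (u - v) v < inner ℝ (u - v) u := by
    have : 0 < inner ℝ (u - v) (u - v) := real_inner_self_pos.mpr huv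
    rw [inner_sub_right] at this
    linarith
  exact hu_gt.trans_le hx_ge

theorem exists_norm_eq_one_forall_inner_lt_of_notMem (hne : K.Nonempty) (hc : IsComplete K)
    (hK : Convex ℝ K) (S : Submodule ℝ F) (hKS : K ⊆ S) (hvS : v ∈ S) (hv : v ∉ K) :
    ∃ w ∈ S, ‖w‖ = 1 ∧ ∀ x ∈ K, inner ℝ w v < inner ℝ w x := by
  obtain ⟨u, huK, hu⟩ := exists_forall_inner_sub_lt_of_notMem hne hc hK hv
  have huv : u - v ≠ 0 := sub_ne_zero.mpr (ne_of_mem_of_not_mem huK hv)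
  refine ⟨‖u - v‖⁻¹ • (u - v), S.smul_mem _ (S.sub_mem (hKS huK) hvS),
    norm_smul_inv_norm huv, fun x hx => ?_⟩
  simp only [real_inner_smul_left]
  exact mul_lt_mul_of_pos_left (hu x hx) (inv_pos.mpr (norm_pos_iff.mpr huv))

end Separation

theorem stmt_6_general {d n : ℕ} (hn : 0 < n) (a : Fin n → EuclideanSpace ℝ (Fin d))
    (γ : ℝ) :
    (∃ w : EuclideanSpace ℝ (Fin d), w ∈ Submodule.span ℝ (Set.range a) ∧ ‖w‖ = 1 ∧
        ∀ i, -γ < (inner ℝ w (a i) : ℝ))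
    ∨ (∀ v : EuclideanSpace ℝ (Fin d), v ∈ Submodule.span ℝ (Set.range a) → ‖v‖ ≤ γ →
        ∃ p : Fin n → ℝ, (∀ i, 0 ≤ p i) ∧ ∑ i, p i = 1 ∧ v = ∑ i, p i • a i) := by
  set K := Fintype.linearCombination ℝ a '' stdSimplex ℝ (Fin n)
  have ha : ∀ i, a i ∈ K := fun i =>
    ⟨Pi.single i 1, single_mem_stdSimplex ℝ i, by simp⟩
  have hK_compact : IsCompact K :=
    (isCompact_stdSimplex ℝ (Fin n)).image (LinearMap.continuous_of_finiteDimensional _)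
  have hK_span : K ⊆ Submodule.span ℝ (range a) := by
    rintro _ ⟨p, -, rfl⟩
    rw [← Fintype.range_linearCombination]
    exact mem_range_self p
  refine or_iff_not_imp_right.mpr fun h => ?_
  push Not at h
  obtain ⟨v, hv_span, hv_norm, hv_notMem⟩ := h
  have hvK : v ∉ K := by
    rintro ⟨p, ⟨hp_nonneg, hp_sum⟩, rfl⟩
    exact hv_notMem p hp_nonneg hp_sum (Fintype.linearCombination_apply ℝ a p)
  obtain ⟨w, hw_span, hw_norm, hw⟩ := exists_norm_eq_one_forall_inner_lt_of_notMem
    ⟨_, ha ⟨0, hn⟩⟩ hK_compact.isComplete ((convex_stdSimplex ℝ (Fin n)).linear_image _)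
    _ hK_span hv_span hvK
  refine ⟨w, hw_span, hw_norm, fun i => ?_⟩
  calc -γ ≤ -‖v‖ := neg_le_neg hv_norm
    _ ≤ inner ℝ w v := by
      simpa [hw_norm] using neg_le_of_abs_le (abs_real_inner_le_norm w v)
    _ < inner ℝ w (a i) := hw _ (ha i)

/-- Gordan's theorem with margin (part 3): for any `γ ≥ 0`, either there is a unit
vector `w ∈ lin(A)` with `⟪w, a i⟫ > -γ` for all `i`, or every `v ∈ lin(A)` with
`‖v‖ ≤ γ` is of the form `A p` for some `p ∈ Δ`. -/
theorem stmt_6 {d n : ℕ} (hn : 0 < n) (a : Fin n → EuclideanSpace ℝ (Fin d))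
    (γ : ℝ) (hγ : 0 ≤ γ) :
    (∃ w : EuclideanSpace ℝ (Fin d), w ∈ Submodule.span ℝ (Set.range a) ∧ ‖w‖ = 1 ∧
        ∀ i, -γ < (inner ℝ w (a i) : ℝ))
    ∨ (∀ v : EuclideanSpace ℝ (Fin d), v ∈ Submodule.span ℝ (Set.range a) → ‖v‖ ≤ γ →
        ∃ p : Fin n → ℝ, (∀ i, 0 ≤ p i) ∧ ∑ i, p i = 1 ∧ v = ∑ i, p i • a i) :=
  stmt_6_general hn a γ
end

section
/- Hoffman-type theorem for the dual system: let A ∈ ℝ^{m×n} with affine margin ρ_A and assume ρ_A < 0; set μ := |ρ_A|. Fix b ∈ ℝ^m and let W = {x ≥ 0 : A x = b}. If W is nonempty, then for every x ≥ 0, dist₁(x, W) ≤ ‖Ax − b‖ / μ, where dist₁ is distance in the ℓ¹ norm and ‖·‖ is the Euclidean norm. -/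
/-! If `r := b - Ax` is nonzero, it lies in `lin(A)` and `(μ / ‖r‖) • r` has norm `μ`, so it is
a convex combination `∑ λᵢ aᵢ`. Then `y := x + (‖r‖ / μ) λ` is nonnegative, satisfies `Ay = b`,
and `‖y - x‖₁ = ‖r‖ / μ`.

The geometric fact is a separation argument: a point `v ∈ lin(A)` outside `conv(A)` is strictly
separated from every `aᵢ` by a unit vector `z ∈ lin(A)`, i.e. `⟪z, v⟫ < ⟪z, aᵢ⟫` for all `i`, while
the margin gives some `i` with `⟪z, aᵢ⟫ ≤ -μ ≤ -‖v‖ ≤ ⟪z, v⟫`. -/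

open Finset Set

theorem mem_convexHull_range_iff_exists_mem_stdSimplex {ι E : Type*} [Fintype ι]
    [AddCommGroup E] [Module ℝ E] {a : ι → E} {v : E} :
    v ∈ convexHull ℝ (range a) ↔ ∃ w ∈ stdSimplex ℝ ι, ∑ i, w i • a i = v := by
  classical
  have : range a = Fintype.linearCombination ℝ a '' range fun i j => if i = j then 1 else 0 := by
    rw [← Set.range_comp]; congr 1; ext i; simp [Fintype.linearCombination_apply]
  rw [this, ← LinearMap.image_convexHull, convexHull_basis_eq_stdSimplex]
  simp [Fintype.linearCombination_apply]

section Margin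

variable {ι E : Type*} [Fintype ι] [NormedAddCommGroup E] [InnerProductSpace ℝ E]
  {a : ι → E} {μ : ℝ}

theorem exists_inner_le_of_iSup_iInf_inner_le [Nonempty ι]
    (hmargin : (⨆ w : {w : E // w ∈ Submodule.span ℝ (range a) ∧ ‖w‖ = 1},
      ⨅ i, inner ℝ (w : E) (a i)) ≤ -μ)
    {w : E} (hw : w ∈ Submodule.span ℝ (range a)) (hw1 : ‖w‖ = 1) :
    ∃ i, inner ℝ w (a i) ≤ -μ := by
  obtain ⟨i₀⟩ := ‹Nonempty ι›
  have hbdd : BddAbove (range fun w : {w : E // w ∈ Submodule.span ℝ (range a) ∧ ‖w‖ = 1} =>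
      ⨅ i, inner ℝ (w : E) (a i)) := by
    refine ⟨‖a i₀‖, ?_⟩
    rintro _ ⟨w, rfl⟩
    calc ⨅ i, inner ℝ (w : E) (a i) ≤ inner ℝ (w : E) (a i₀) :=
          ciInf_le (Finite.bddBelow_range _) i₀
      _ ≤ ‖(w : E)‖ * ‖a i₀‖ := real_inner_le_norm _ _
      _ = ‖a i₀‖ := by rw [w.2.2, one_mul]
  obtain ⟨i, hi⟩ := exists_eq_ciInf_of_finite (f := fun i => inner ℝ w (a i))
  exact ⟨i, hi ▸ (le_ciSup hbdd ⟨w, hw, hw1⟩).trans hmargin⟩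

theorem mem_convexHull_of_norm_le [Nonempty ι]
    (hmargin : ∀ w ∈ Submodule.span ℝ (range a), ‖w‖ = 1 → ∃ i, inner ℝ w (a i) ≤ -μ)
    {v : E} (hv : v ∈ Submodule.span ℝ (range a)) (hvμ : ‖v‖ ≤ μ) :
    v ∈ convexHull ℝ (range a) := by
  set K := Submodule.span ℝ (range a)
  have : FiniteDimensional ℝ K := FiniteDimensional.span_of_finite ℝ (finite_range a)
  by_contra hnot
  obtain ⟨f, u, hfv, hfa⟩ := geometric_hahn_banach_point_closed (convex_convexHull ℝ _)
    ((finite_range a).isClosed_convexHull (𝕜 := ℝ)) hnot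
  -- Riesz representation in `K` itself, so that the separating vector lies in `lin(A)`.
  set w : K := (InnerProductSpace.toDual ℝ K).symm (f.comp K.subtypeL)
  have hw : ∀ p ∈ K, inner ℝ (w : E) p = f p := fun p hp => by
    rw [← Submodule.coe_mk p hp, ← Submodule.coe_inner, InnerProductSpace.toDual_symm_apply]
    rfl
  have hwa : ∀ i, u < inner ℝ (w : E) (a i) := fun i => by
    rw [hw _ (Submodule.subset_span ⟨i, rfl⟩)]
    exact hfa _ (subset_convexHull ℝ _ ⟨i, rfl⟩)
  have hwv : inner ℝ (w : E) v < u := by rw [hw v hv]; exact hfv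
  have hw0 : (w : E) ≠ 0 := by
    intro h
    obtain ⟨i⟩ := ‹Nonempty ι›
    have := hwa i
    simp only [h, inner_zero_left] at this hwv
    linarith
  set z := ‖(w : E)‖⁻¹ • (w : E)
  have hz : ‖z‖ = 1 := by
    rw [norm_smul, norm_inv, norm_norm, inv_mul_cancel₀ (norm_ne_zero_iff.mpr hw0)]
  obtain ⟨i, hi⟩ := hmargin z (K.smul_mem _ w.2) hz
  have hzv : -μ ≤ inner ℝ z v := by
    have := abs_real_inner_le_norm z v
    rw [hz, one_mul] at this
    linarith [neg_abs_le (inner ℝ z v)]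
  have hzva : inner ℝ z v < inner ℝ z (a i) := by
    simp only [z, real_inner_smul_left]
    exact mul_lt_mul_of_pos_left (hwv.trans (hwa i)) (inv_pos.mpr (norm_pos_iff.mpr hw0))
  linarith

theorem exists_nonneg_sum_smul_eq_of_mem_span [Nonempty ι] (hμ : 0 < μ)
    (hmargin : ∀ w ∈ Submodule.span ℝ (range a), ‖w‖ = 1 → ∃ i, inner ℝ w (a i) ≤ -μ)
    {r : E} (hr : r ∈ Submodule.span ℝ (range a)) :
    ∃ d : ι → ℝ, (∀ i, 0 ≤ d i) ∧ ∑ i, d i = ‖r‖ / μ ∧ ∑ i, d i • a i = r := by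
  rcases eq_or_ne r 0 with rfl | hr0
  · exact ⟨0, fun _ => le_rfl, by simp, by simp⟩
  have hrpos : 0 < ‖r‖ := norm_pos_iff.mpr hr0
  have hv : ‖(μ / ‖r‖) • r‖ ≤ μ := by
    rw [norm_smul, Real.norm_of_nonneg (div_pos hμ hrpos).le, div_mul_cancel₀ _ hrpos.ne']
  obtain ⟨l, ⟨hl0, hl1⟩, hlv⟩ := mem_convexHull_range_iff_exists_mem_stdSimplex.mp
    (mem_convexHull_of_norm_le hmargin (Submodule.smul_mem _ _ hr) hv)
  refine ⟨(‖r‖ / μ) • l, fun i => mul_nonneg (div_pos hrpos hμ).le (hl0 i), ?_, ?_⟩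
  · simp [← Finset.mul_sum, hl1]
  · calc ∑ i, ((‖r‖ / μ) • l) i • a i = (‖r‖ / μ) • ∑ i, l i • a i := by
          simp only [Pi.smul_apply, smul_eq_mul, Finset.smul_sum, smul_smul]
      _ = r := by rw [hlv, smul_smul, div_mul_div_cancel₀ hμ.ne', div_self hrpos.ne', one_smul]

end Margin

/-- Hoffman-type theorem for the dual system: if the affine margin is `-μ < 0`,
`W = {x ≥ 0 : Ax = b}` is nonempty, then for every `x ≥ 0`,
`dist₁(x, W) ≤ ‖Ax - b‖ / μ`. -/
theorem stmt_8 {m n : ℕ} (hn : 0 < n) (a : Fin n → EuclideanSpace ℝ (Fin m))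
    (μ : ℝ) (hμ : 0 < μ)
    (hmargin : (⨆ w : {w : EuclideanSpace ℝ (Fin m) //
        w ∈ Submodule.span ℝ (Set.range a) ∧ ‖w‖ = 1},
      ⨅ i : Fin n, (inner ℝ (w : EuclideanSpace ℝ (Fin m)) (a i) : ℝ)) = -μ)
    (b : EuclideanSpace ℝ (Fin m))
    (W : Set (Fin n → ℝ))
    (hW : W = {x | (∀ i, 0 ≤ x i) ∧ ∑ i, x i • a i = b})
    (hWne : W.Nonempty) :
    ∀ x : Fin n → ℝ, (∀ i, 0 ≤ x i) →
      sInf {r : ℝ | ∃ y ∈ W, r = ∑ i, |x i - y i|} ≤ ‖(∑ i, x i • a i) - b‖ / μ := by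
  intro x hx
  subst hW
  obtain ⟨y₀, -, hy₀⟩ := hWne
  have : Nonempty (Fin n) := ⟨⟨0, hn⟩⟩
  have hspan : ∀ z : Fin n → ℝ, ∑ i, z i • a i ∈ Submodule.span ℝ (range a) := fun z =>
    Submodule.sum_mem _ fun i _ => Submodule.smul_mem _ _ (Submodule.subset_span ⟨i, rfl⟩)
  obtain ⟨d, hd0, hd1, hda⟩ := exists_nonneg_sum_smul_eq_of_mem_span hμ
    (fun w hw hw1 => exists_inner_le_of_iSup_iInf_inner_le hmargin.le hw hw1)
    (Submodule.sub_mem _ (hy₀ ▸ hspan y₀) (hspan x))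
  have hxd : x + d ∈ {y : Fin n → ℝ | (∀ i, 0 ≤ y i) ∧ ∑ i, y i • a i = b} := by
    refine ⟨fun i => add_nonneg (hx i) (hd0 i), ?_⟩
    simp only [Pi.add_apply, add_smul, Finset.sum_add_distrib, hda, add_sub_cancel]
  refine csInf_le ⟨0, ?_⟩ ⟨x + d, hxd, ?_⟩
  · rintro _ ⟨y, -, rfl⟩
    exact Finset.sum_nonneg fun i _ => abs_nonneg _
  · simp only [Pi.add_apply, sub_add_cancel_left, abs_neg, abs_of_nonneg (hd0 _), hd1, norm_sub_rev]
end

section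
/- Hoffman-type theorem on the simplex: let A ∈ ℝ^{m×n} with |ρ_A⁻| = μ > 0 and define W = {p ∈ Δ : A p = 0}. Then for every p ∈ Δ, dist₁(p, W) ≤ 2‖Ap‖ / (‖Ap‖ + μ) ≤ 2‖Ap‖ / μ. -/
/-!
Write `Ap = ∑ i, p i • a i`, `v = Ap` and `t = ‖v‖`. The margin hypothesis says that no unit
direction of `lin(A)` sees all columns strictly above `-μ`; by separating a point from the
compact convex set `A Δ` this means that `A Δ` contains the whole `μ`-ball of `lin(A)`.
In particular `-(μ / t) v = Ap'` for some `p' ∈ Δ`, and the convex combination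
`q = s p + (1 - s) p'` with `s = μ / (μ + t)` satisfies `Aq = 0`. Its `ℓ¹`-distance to `p` is
`(1 - s) ‖p - p'‖₁`, and two points of the simplex are at `ℓ¹`-distance at most `2`.
-/

open Finset
open scoped RealInnerProductSpace

section

variable {ι : Type*} [Fintype ι]

lemma sum_abs_sub_le_two_of_mem_stdSimplex {p q : ι → ℝ} (hp : p ∈ stdSimplex ℝ ι)
    (hq : q ∈ stdSimplex ℝ ι) : ∑ i, |p i - q i| ≤ 2 :=
  calc ∑ i, |p i - q i| ≤ ∑ i, (p i + q i) :=
        sum_le_sum fun i _ => abs_sub_le_iff.2 ⟨by linarith [hq.1 i], by linarith [hp.1 i]⟩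
    _ = 2 := by rw [sum_add_distrib, hp.2, hq.2]; norm_num

lemma sum_abs_sub_smul_add_one_sub_smul {p p' : ι → ℝ} {s : ℝ} (hs : s ≤ 1) :
    ∑ i, |p i - (s • p + (1 - s) • p') i| = (1 - s) * ∑ i, |p i - p' i| := by
  rw [mul_sum]
  refine sum_congr rfl fun i _ => ?_
  have : p i - (s • p + (1 - s) • p') i = (1 - s) * (p i - p' i) := by
    simp only [Pi.add_apply, Pi.smul_apply, smul_eq_mul]
    ring
  rw [this, abs_mul, abs_of_nonneg (sub_nonneg.2 hs)]

variable {E : Type*} [NormedAddCommGroup E] [InnerProductSpace ℝ E] (a : ι → E)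

lemma exists_mem_stdSimplex_sum_eq_zero_of_ball_subset {μ : ℝ} (hμ : 0 < μ)
    (hball : ∀ v ∈ Submodule.span ℝ (Set.range a), ‖v‖ ≤ μ →
      v ∈ Fintype.linearCombination ℝ a '' stdSimplex ℝ ι)
    {p : ι → ℝ} (hp : p ∈ stdSimplex ℝ ι) :
    ∃ q ∈ stdSimplex ℝ ι, ∑ i, q i • a i = 0 ∧
      ∑ i, |p i - q i| ≤ 2 * ‖∑ i, p i • a i‖ / (‖∑ i, p i • a i‖ + μ) := by
  simp only [← Fintype.linearCombination_apply ℝ] at hball ⊢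
  generalize hv : Fintype.linearCombination ℝ a p = v
  have hvK : v ∈ Submodule.span ℝ (Set.range a) := hv ▸
    Submodule.sum_mem _ fun i _ => Submodule.smul_mem _ _ (Submodule.subset_span ⟨i, rfl⟩)
  have hμv : ‖v‖ • (μ / ‖v‖) • v = μ • v := by
    rcases eq_or_ne v 0 with h | h
    · simp [h]
    · rw [smul_smul, mul_div_cancel₀ _ (norm_ne_zero_iff.2 h)]
  have hu : ‖-((μ / ‖v‖) • v)‖ ≤ μ := by
    rcases eq_or_ne v 0 with h | h
    · simp [h, hμ.le]
    · rw [norm_neg, norm_smul, Real.norm_of_nonneg (by positivity),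
        div_mul_cancel₀ _ (norm_ne_zero_iff.2 h)]
  obtain ⟨p', hp', hp'v⟩ := hball _ (Submodule.neg_mem _ (Submodule.smul_mem _ _ hvK)) hu
  refine ⟨(μ / (μ + ‖v‖)) • p + (‖v‖ / (μ + ‖v‖)) • p',
    convex_stdSimplex ℝ ι hp hp' (by positivity) (by positivity) (by field_simp), ?_, ?_⟩
  · rw [map_add, map_smul, map_smul, hv, hp'v, smul_neg, div_eq_inv_mul, div_eq_inv_mul,
      mul_smul, mul_smul, hμv, add_neg_cancel]
  · have hs : ‖v‖ / (μ + ‖v‖) = 1 - μ / (μ + ‖v‖) := by field_simp; ring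
    rw [hs, sum_abs_sub_smul_add_one_sub_smul
      (div_le_one_of_le₀ (le_add_of_nonneg_right (norm_nonneg v)) (by positivity)), ← hs]
    calc ‖v‖ / (μ + ‖v‖) * ∑ i, |p i - p' i| ≤ ‖v‖ / (μ + ‖v‖) * 2 := by
          gcongr; exact sum_abs_sub_le_two_of_mem_stdSimplex hp hp'
      _ = 2 * ‖v‖ / (‖v‖ + μ) := by ring

lemma exists_inner_le_of_iSup_iInf_le [Nonempty ι] {c : ℝ}
    (h : (⨆ w : {w : E // w ∈ Submodule.span ℝ (Set.range a) ∧ ‖w‖ = 1},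
      ⨅ i, ⟪(w : E), a i⟫) ≤ c)
    (z : E) (hzK : z ∈ Submodule.span ℝ (Set.range a)) (hz : ‖z‖ = 1) :
    ∃ i, ⟪z, a i⟫ ≤ c := by
  obtain ⟨i₀, hi₀⟩ := exists_eq_ciInf_of_finite (f := fun i => ⟪z, a i⟫)
  have hbdd : BddAbove (Set.range fun w : {w : E // w ∈ Submodule.span ℝ (Set.range a) ∧
      ‖w‖ = 1} => ⨅ i, ⟪(w : E), a i⟫) := by
    refine ⟨‖a i₀‖, ?_⟩
    rintro r ⟨⟨w, -, hw⟩, rfl⟩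
    calc ⨅ i, ⟪w, a i⟫ ≤ ⟪w, a i₀⟫ := ciInf_le (Set.finite_range _).bddBelow i₀
      _ ≤ ‖w‖ * ‖a i₀‖ := real_inner_le_norm _ _
      _ = ‖a i₀‖ := by rw [hw, one_mul]
  exact ⟨i₀, hi₀ ▸ (le_ciSup hbdd ⟨z, hzK, hz⟩).trans h⟩

variable [CompleteSpace E]

lemma exists_inner_lt_of_notMem_image_stdSimplex {v : E}
    (hv : v ∉ Fintype.linearCombination ℝ a '' stdSimplex ℝ ι) :
    ∃ w : E, ∀ i, ⟪w, v⟫ < ⟪w, a i⟫ := by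
  classical
  obtain ⟨f, u, hfv, hf⟩ := geometric_hahn_banach_point_closed
    ((convex_stdSimplex ℝ ι).linear_image _)
    ((isCompact_stdSimplex ℝ ι).image (LinearMap.continuous_of_finiteDimensional _)).isClosed
    hv
  refine ⟨(InnerProductSpace.toDual ℝ E).symm f, fun i => ?_⟩
  simp only [InnerProductSpace.toDual_symm_apply]
  exact hfv.trans <| hf _ ⟨_, single_mem_stdSimplex ℝ i, by simp⟩

lemma exists_unit_mem_span_inner_lt [Nonempty ι] {v : E}
    (hvK : v ∈ Submodule.span ℝ (Set.range a))
    (hv : v ∉ Fintype.linearCombination ℝ a '' stdSimplex ℝ ι) :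
    ∃ z ∈ Submodule.span ℝ (Set.range a), ‖z‖ = 1 ∧ ∀ i, ⟪z, v⟫ < ⟪z, a i⟫ := by
  set K := Submodule.span ℝ (Set.range a)
  have : FiniteDimensional ℝ K := FiniteDimensional.span_of_finite ℝ (Set.finite_range a)
  obtain ⟨w, hw⟩ := exists_inner_lt_of_notMem_image_stdSimplex a hv
  set w' := K.starProjection w
  have hproj : ∀ y ∈ K, ⟪w', y⟫ = ⟪w, y⟫ := fun y hy => by
    rw [K.inner_starProjection_left_eq_right, K.starProjection_eq_self_iff.2 hy]
  have hw' : ∀ i, ⟪w', v⟫ < ⟪w', a i⟫ := fun i => by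
    rw [hproj _ hvK, hproj _ (Submodule.subset_span ⟨i, rfl⟩)]
    exact hw i
  have hw'0 : w' ≠ 0 := by
    rintro h
    simpa [h] using hw' (Classical.arbitrary ι)
  refine ⟨‖w'‖⁻¹ • w', K.smul_mem _ (K.starProjection_apply_mem w),
    norm_smul_inv_norm hw'0, fun i => ?_⟩
  simp only [real_inner_smul_left]
  exact mul_lt_mul_of_pos_left (hw' i) (inv_pos.2 (norm_pos_iff.2 hw'0))

lemma mem_image_stdSimplex_of_norm_le [Nonempty ι] {μ : ℝ}
    (hmargin : ∀ z ∈ Submodule.span ℝ (Set.range a), ‖z‖ = 1 → ∃ i, ⟪z, a i⟫ ≤ -μ)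
    (v : E) (hvK : v ∈ Submodule.span ℝ (Set.range a)) (hv : ‖v‖ ≤ μ) :
    v ∈ Fintype.linearCombination ℝ a '' stdSimplex ℝ ι := by
  by_contra hvΔ
  obtain ⟨z, hzK, hz, hzv⟩ := exists_unit_mem_span_inner_lt a hvK hvΔ
  obtain ⟨i, hi⟩ := hmargin z hzK hz
  have : -⟪z, v⟫ ≤ ‖z‖ * ‖v‖ := by simpa using real_inner_le_norm z (-v)
  rw [hz, one_mul] at this
  linarith [hzv i]

end

/-- Hoffman-type theorem on the simplex: if the affine margin is `-μ < 0` and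
`W = {p ∈ Δ : Ap = 0}`, then for every `p ∈ Δ`,
`dist₁(p, W) ≤ 2‖Ap‖/(‖Ap‖ + μ) ≤ 2‖Ap‖/μ`. -/
theorem stmt_9 {m n : ℕ} (hn : 0 < n) (a : Fin n → EuclideanSpace ℝ (Fin m))
    (μ : ℝ) (hμ : 0 < μ)
    (hmargin : (⨆ w : {w : EuclideanSpace ℝ (Fin m) //
        w ∈ Submodule.span ℝ (Set.range a) ∧ ‖w‖ = 1},
      ⨅ i : Fin n, (inner ℝ (w : EuclideanSpace ℝ (Fin m)) (a i) : ℝ)) = -μ)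
    (W : Set (Fin n → ℝ))
    (hW : W = {q | (∀ i, 0 ≤ q i) ∧ ∑ i, q i = 1 ∧ ∑ i, q i • a i = 0}) :
    ∀ p : Fin n → ℝ, (∀ i, 0 ≤ p i) → ∑ i, p i = 1 →
      sInf {r : ℝ | ∃ q ∈ W, r = ∑ i, |p i - q i|}
          ≤ 2 * ‖∑ i, p i • a i‖ / (‖∑ i, p i • a i‖ + μ)
      ∧ 2 * ‖∑ i, p i • a i‖ / (‖∑ i, p i • a i‖ + μ)
          ≤ 2 * ‖∑ i, p i • a i‖ / μ := by
  intro p hp hps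
  have : Nonempty (Fin n) := ⟨⟨0, hn⟩⟩
  obtain ⟨q, ⟨hq, hqs⟩, hq0, hpq⟩ := exists_mem_stdSimplex_sum_eq_zero_of_ball_subset a hμ
    (mem_image_stdSimplex_of_norm_le a (exists_inner_le_of_iSup_iInf_le a hmargin.le)) ⟨hp, hps⟩
  subst hW
  constructor
  · refine (csInf_le ?_ ?_).trans hpq
    · refine ⟨0, ?_⟩
      rintro r ⟨q', -, rfl⟩
      positivity
    · exact ⟨q, ⟨hq, hqs, hq0⟩, rfl⟩
  · gcongr
    linarith [norm_nonneg (∑ i, p i • a i)]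
end

section
/- Subgradient bound and strong-convexity recursion for Normalized Perceptron: let L(w) = ½‖w‖² − min_i ⟨w,a_i⟩ with unit-norm a_i and minimizer ρw*. If w_t = Aα_t with α_t ∈ Δ and g_t = w_t − a_{i(t)} where a_{i(t)} achieves min_i ⟨w_t, a_i⟩, then ‖g_t‖ ≤ 2 and ⟨g_t, w_t − ρw*⟩ ≥ ‖w_t − ρw*‖², and consequently for w_{t+1} = w_t − g_t/(t+1): ‖w_{t+1} − ρw*‖² ≤ (1 − 2/(t+1))‖w_t − ρw*‖² + 4/(t+1)². -/
/-!
The map `f u = minᵢ ⟪u, aᵢ⟫` is superadditive and positively homogeneous, and `w*` maximizes it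
on the unit sphere with value `ρ`. Comparing `f (w* + η v) ≥ ρ + η f v` with
`f (w* + η v) ≤ ρ ‖w* + η v‖ ≤ ρ (1 + η ⟪w*, v⟫ + O(η²))` and letting `η → 0⁺` gives
`f v ≤ ρ ⟪w*, v⟫` for every `v`; this is the first-order optimality of `ρ w*` for `L`.
With `v = w` it yields `⟪g, w - ρ w*⟫ ≥ ‖w - ρ w*‖²`, and expanding `‖w - ρ w* - s g‖²` gives
the recursion. The bound `‖g‖ ≤ 2` holds because `w` lies in the unit ball, as a convex
combination of unit vectors.
-/

open Filter Topology
open scoped RealInnerProductSpace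

section InnerProductSpace

variable {E : Type*} [NormedAddCommGroup E] [InnerProductSpace ℝ E]

lemma norm_add_smul_le_of_norm_eq_one {w : E} (hw : ‖w‖ = 1) (v : E) (η : ℝ) :
    ‖w + η • v‖ ≤ 1 + η * ⟪w, v⟫ + η ^ 2 * ‖v‖ ^ 2 / 2 := by
  have hsq : ‖w + η • v‖ ^ 2 = 1 + 2 * (η * ⟪w, v⟫) + η ^ 2 * ‖v‖ ^ 2 := by
    rw [norm_add_sq_real, hw, real_inner_smul_right, norm_smul, mul_pow, Real.norm_eq_abs,
      sq_abs, one_pow]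
  nlinarith [sq_nonneg (‖w + η • v‖ - 1)]

lemma le_mul_norm_of_le_on_sphere {f : E → ℝ}
    (hsmul : ∀ c : ℝ, 0 ≤ c → ∀ x, f (c • x) = c * f x) {ρ : ℝ}
    (hsphere : ∀ u, ‖u‖ = 1 → f u ≤ ρ) (u : E) : f u ≤ ρ * ‖u‖ := by
  rcases eq_or_ne u 0 with rfl | hu
  · simpa using (hsmul 0 le_rfl 0).le
  · calc f u = ‖u‖ * f (‖u‖⁻¹ • u) := by
          rw [← hsmul _ (norm_nonneg u), smul_inv_smul₀ (norm_ne_zero_iff.mpr hu)]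
      _ ≤ ‖u‖ * ρ := mul_le_mul_of_nonneg_left (hsphere _ (norm_smul_inv_norm hu)) (norm_nonneg u)
      _ = ρ * ‖u‖ := mul_comm _ _

lemma le_mul_inner_of_le_on_sphere {f : E → ℝ} (hadd : ∀ x y, f x + f y ≤ f (x + y))
    (hsmul : ∀ c : ℝ, 0 ≤ c → ∀ x, f (c • x) = c * f x) {ρ : ℝ} (hρ : 0 ≤ ρ)
    (hsphere : ∀ u, ‖u‖ = 1 → f u ≤ ρ) {w : E} (hw : ‖w‖ = 1) (hfw : ρ ≤ f w) (v : E) :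
    f v ≤ ρ * ⟪w, v⟫ := by
  set K := ρ * ‖v‖ ^ 2 / 2
  have hstep : ∀ η > 0, f v ≤ ρ * ⟪w, v⟫ + η * K := by
    intro η hη
    have hlower : ρ + η * f v ≤ f (w + η • v) := by
      calc ρ + η * f v ≤ f w + f (η • v) := by rw [hsmul η hη.le]; linarith
        _ ≤ f (w + η • v) := hadd _ _
    have hupper : f (w + η • v) ≤ ρ * (1 + η * ⟪w, v⟫ + η ^ 2 * ‖v‖ ^ 2 / 2) :=
      (le_mul_norm_of_le_on_sphere hsmul hsphere _).trans
        (mul_le_mul_of_nonneg_left (norm_add_smul_le_of_norm_eq_one hw v η) hρ)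
    refine le_of_mul_le_mul_left ?_ hη
    linear_combination hlower.trans hupper
  have hlim : Tendsto (fun η : ℝ => ρ * ⟪w, v⟫ + η * K) (𝓝[>] 0) (𝓝 (ρ * ⟪w, v⟫)) :=
    tendsto_nhdsWithin_of_tendsto_nhds (by simpa using ((tendsto_id (x := 𝓝 (0 : ℝ))).mul_const K).const_add (ρ * ⟪w, v⟫))
  exact ge_of_tendsto hlim (eventually_nhdsWithin_of_forall hstep)

lemma norm_sub_sq_le_inner_sub_sub {w a z : E} (hwa : ⟪w, a⟫ ≤ ⟪z, w⟫)
    (hza : ‖z‖ ^ 2 ≤ ⟪z, a⟫) : ‖w - z‖ ^ 2 ≤ ⟪w - a, w - z⟫ := by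
  rw [← real_inner_self_eq_norm_sq] at hza ⊢
  simp only [inner_sub_left, inner_sub_right]
  linarith [real_inner_comm a w, real_inner_comm a z, real_inner_comm w z]

lemma norm_sub_smul_sq_le {W g : E} {s G : ℝ} (hs : 0 ≤ s) (hW : ‖W‖ ^ 2 ≤ ⟪g, W⟫)
    (hg : ‖g‖ ≤ G) : ‖W - s • g‖ ^ 2 ≤ (1 - 2 * s) * ‖W‖ ^ 2 + s ^ 2 * G ^ 2 := by
  have hg2 : ‖g‖ ^ 2 ≤ G ^ 2 := pow_le_pow_left₀ (norm_nonneg g) hg 2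
  rw [norm_sub_sq_real, real_inner_smul_right, norm_smul, mul_pow, Real.norm_eq_abs, sq_abs,
    real_inner_comm]
  nlinarith [mul_le_mul_of_nonneg_left hW hs, mul_le_mul_of_nonneg_left hg2 (sq_nonneg s)]

variable {ι : Type*}

/-- For empty `ι` this is the junk value `0`. -/
noncomputable def minInner (a : ι → E) (u : E) : ℝ := ⨅ i, ⟪u, a i⟫

variable (a : ι → E)

lemma minInner_le [Finite ι] (u : E) (i : ι) : minInner a u ≤ ⟪u, a i⟫ :=
  ciInf_le (Set.finite_range _).bddBelow i

lemma le_minInner [Nonempty ι] {u : E} {m : ℝ} (h : ∀ i, m ≤ ⟪u, a i⟫) : m ≤ minInner a u :=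
  le_ciInf h

lemma minInner_add_ge [Finite ι] [Nonempty ι] (x y : E) :
    minInner a x + minInner a y ≤ minInner a (x + y) :=
  le_minInner a fun i => by
    rw [inner_add_left]
    exact add_le_add (minInner_le a x i) (minInner_le a y i)

lemma minInner_smul (c : ℝ) (hc : 0 ≤ c) (x : E) : minInner a (c • x) = c * minInner a x := by
  simp only [minInner, real_inner_smul_left]
  exact (Real.mul_iInf_of_nonneg hc _).symm

end InnerProductSpace

theorem stmt_15_general {d n : ℕ} (a : Fin n → EuclideanSpace ℝ (Fin d))
    (ha : ∀ i, ‖a i‖ = 1)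
    (ρ : ℝ) (hρpos : 0 < ρ)
    (wstar : EuclideanSpace ℝ (Fin d)) (hwstar : ‖wstar‖ = 1)
    (hattain : (⨅ i : Fin n, (inner ℝ wstar (a i) : ℝ)) = ρ)
    (hopt : ∀ u : EuclideanSpace ℝ (Fin d), ‖u‖ = 1 →
      (⨅ i : Fin n, (inner ℝ u (a i) : ℝ)) ≤ ρ)
    (α : Fin n → ℝ) (hα0 : ∀ i, 0 ≤ α i) (hα1 : ∑ i, α i = 1)
    (w : EuclideanSpace ℝ (Fin d)) (hwa : w = ∑ i, α i • a i)
    (j : Fin n) (hj : ∀ i, (inner ℝ w (a j) : ℝ) ≤ (inner ℝ w (a i) : ℝ))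
    (g : EuclideanSpace ℝ (Fin d)) (hg : g = w - a j)
    (t : ℕ) :
    ‖g‖ ≤ 2
    ∧ ‖w - ρ • wstar‖ ^ 2 ≤ (inner ℝ g (w - ρ • wstar) : ℝ)
    ∧ ‖(w - (1 / ((t : ℝ) + 1)) • g) - ρ • wstar‖ ^ 2
        ≤ (1 - 2 / ((t : ℝ) + 1)) * ‖w - ρ • wstar‖ ^ 2 + 4 / ((t : ℝ) + 1) ^ 2 := by
  have : Nonempty (Fin n) := ⟨j⟩
  have hw : ‖w‖ ≤ 1 := by
    simpa [hwa] using (convex_closedBall (0 : EuclideanSpace ℝ (Fin d)) 1).sum_mem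
      (fun i _ => hα0 i) hα1 (fun i _ => by simp [ha i])
  have hgnorm : ‖g‖ ≤ 2 := hg ▸ (norm_sub_le _ _).trans (by linarith [ha j])
  have hmin : ⟪w, a j⟫ ≤ minInner a w := le_minInner a hj
  have hfirstOrder : minInner a w ≤ ρ * ⟪wstar, w⟫ :=
    le_mul_inner_of_le_on_sphere (minInner_add_ge a) (minInner_smul a) hρpos.le hopt hwstar
      hattain.ge w
  have hρj : ρ ≤ ⟪wstar, a j⟫ := hattain ▸ minInner_le a wstar j
  have hdescent : ‖w - ρ • wstar‖ ^ 2 ≤ ⟪g, w - ρ • wstar⟫ := by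
    rw [hg]
    refine norm_sub_sq_le_inner_sub_sub ?_ ?_
    · rw [real_inner_smul_left]
      exact hmin.trans hfirstOrder
    · rw [norm_smul, hwstar, real_inner_smul_left, Real.norm_of_nonneg hρpos.le, mul_one, sq]
      exact mul_le_mul_of_nonneg_left hρj hρpos.le
  refine ⟨hgnorm, hdescent, ?_⟩
  have hs : (0 : ℝ) ≤ 1 / ((t : ℝ) + 1) := by positivity
  convert norm_sub_smul_sq_le hs hdescent hgnorm using 2
  · rw [sub_right_comm]
  · ring
  · field_simp; ring

/-- Subgradient bound and strong-convexity recursion for the Normalized Perceptron: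
`‖g‖ ≤ 2`, `⟪g, w − ρw*⟫ ≥ ‖w − ρw*‖²`, and the one-step recursion for
`w' = w − g/(t+1)`. -/
theorem stmt_15 {d n : ℕ} (hn : 0 < n) (a : Fin n → EuclideanSpace ℝ (Fin d))
    (ha : ∀ i, ‖a i‖ = 1)
    (ρ : ℝ) (hρpos : 0 < ρ)
    (wstar : EuclideanSpace ℝ (Fin d)) (hwstar : ‖wstar‖ = 1)
    (hattain : (⨅ i : Fin n, (inner ℝ wstar (a i) : ℝ)) = ρ)
    (hopt : ∀ u : EuclideanSpace ℝ (Fin d), ‖u‖ = 1 →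
      (⨅ i : Fin n, (inner ℝ u (a i) : ℝ)) ≤ ρ)
    (α : Fin n → ℝ) (hα0 : ∀ i, 0 ≤ α i) (hα1 : ∑ i, α i = 1)
    (w : EuclideanSpace ℝ (Fin d)) (hwa : w = ∑ i, α i • a i)
    (j : Fin n) (hj : ∀ i, (inner ℝ w (a j) : ℝ) ≤ (inner ℝ w (a i) : ℝ))
    (g : EuclideanSpace ℝ (Fin d)) (hg : g = w - a j)
    (t : ℕ) :
    ‖g‖ ≤ 2
    ∧ ‖w - ρ • wstar‖ ^ 2 ≤ (inner ℝ g (w - ρ • wstar) : ℝ)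
    ∧ ‖(w - (1 / ((t : ℝ) + 1)) • g) - ρ • wstar‖ ^ 2
        ≤ (1 - 2 / ((t : ℝ) + 1)) * ‖w - ρ • wstar‖ ^ 2 + 4 / ((t : ℝ) + 1) ^ 2 :=
  stmt_15_general a ha ρ hρpos wstar hwstar hattain hopt α hα0 hα1 w hwa j hj g hg t
end

section
/- Linear convergence of the Von-Neumann–Gilbert step: let a_1,...,a_n be unit vectors, μ := |ρ_A⁻| > 0 (affine margin is −μ), and let w ∈ lin(A), w ≠ 0, w ∈ conv(A). Choose a_i with ⟨w/‖w‖, a_i⟩ ≤ −μ (which exists by definition of the affine margin). Then the point w' of minimum norm on the segment [w, a_i] satisfies ‖w'‖ ≤ ‖w‖·√(1 − μ²). -/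
/-!
On the line through `w` and a unit vector `v` with `c := ⟪w, v⟫ ≤ 0`, the point
`t • w + (1 - t) • v` with `t = (1 - c) / ‖w - v‖²` lies on the segment and has squared norm
`(‖w‖² - c²) / ‖w - v‖²`. Since `‖w - v‖² = ‖w‖² - 2c + 1 ≥ 1`, this is at most `‖w‖² - c²`,
and `c² ≥ μ² ‖w‖²` when `c ≤ -μ ‖w‖` with `μ ≥ 0`.
-/

open Set

section NormedSpace

variable {E : Type*} [NormedAddCommGroup E] [NormedSpace ℝ E]

theorem exists_isMinOn_norm_smul_add_one_sub_smul (w v : E) :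
    ∃ t ∈ Icc (0 : ℝ) 1, IsMinOn (fun s : ℝ => ‖s • w + (1 - s) • v‖) (Icc 0 1) t :=
  isCompact_Icc.exists_isMinOn (nonempty_Icc.2 zero_le_one) (by fun_prop)

end NormedSpace

section InnerProductSpace

variable {E : Type*} [NormedAddCommGroup E] [InnerProductSpace ℝ E]

theorem norm_smul_add_one_sub_smul_sq (w v : E) (t : ℝ) :
    ‖t • w + (1 - t) • v‖ ^ 2
      = t ^ 2 * ‖w‖ ^ 2 + 2 * t * (1 - t) * inner ℝ w v + (1 - t) ^ 2 * ‖v‖ ^ 2 := by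
  rw [norm_add_sq_real, norm_smul, norm_smul, real_inner_smul_left, real_inner_smul_right,
    mul_pow, mul_pow, Real.norm_eq_abs, Real.norm_eq_abs, sq_abs, sq_abs]
  ring

theorem exists_mem_Icc_norm_sq_le_of_inner_nonpos {w v : E} (hv : ‖v‖ = 1)
    (hc : inner ℝ w v ≤ 0) :
    ∃ t ∈ Icc (0 : ℝ) 1, ‖t • w + (1 - t) • v‖ ^ 2 ≤ ‖w‖ ^ 2 - inner ℝ w v ^ 2 := by
  set c := inner ℝ w v
  set W := ‖w‖
  have hcW : -W ≤ c := by
    simpa [hv] using neg_le_of_abs_le (abs_real_inner_le_norm w v)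
  set D := W ^ 2 - 2 * c + 1
  have hD : 1 ≤ D := by nlinarith [norm_nonneg w]
  have hD0 : 0 < D := by linarith
  refine ⟨(1 - c) / D, ⟨div_nonneg (by linarith) hD0.le, by rw [div_le_one hD0]; nlinarith⟩, ?_⟩
  have hval : ‖((1 - c) / D) • w + (1 - (1 - c) / D) • v‖ ^ 2 = (W ^ 2 - c ^ 2) / D := by
    rw [norm_smul_add_one_sub_smul_sq, hv]
    field_simp
    ring
  have hgap : 0 ≤ W ^ 2 - c ^ 2 := by nlinarith
  rw [hval, div_le_iff₀ hD0]
  nlinarith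

end InnerProductSpace

theorem stmt_18_general {d n : ℕ} (a : Fin n → EuclideanSpace ℝ (Fin d))
    (ha : ∀ i, ‖a i‖ = 1)
    (μ : ℝ) (hμ0 : 0 < μ)
    (w : EuclideanSpace ℝ (Fin d))
    (i : Fin n) (hi : (inner ℝ w (a i) : ℝ) ≤ -μ * ‖w‖) :
    ∃ l ∈ Set.Icc (0 : ℝ) 1,
      (∀ l' ∈ Set.Icc (0 : ℝ) 1, ‖l • w + (1 - l) • a i‖ ≤ ‖l' • w + (1 - l') • a i‖)
      ∧ ‖l • w + (1 - l) • a i‖ ≤ ‖w‖ * Real.sqrt (1 - μ ^ 2) := by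
  obtain ⟨l, hl, hmin⟩ := exists_isMinOn_norm_smul_add_one_sub_smul w (a i)
  refine ⟨l, hl, fun l' hl' => hmin hl', ?_⟩
  have hμw : 0 ≤ μ * ‖w‖ := by positivity
  obtain ⟨t, ht, hbound⟩ :=
    exists_mem_Icc_norm_sq_le_of_inner_nonpos (ha i) (hi.trans (by linarith))
  have hsq : ‖l • w + (1 - l) • a i‖ ^ 2 ≤ ‖w‖ ^ 2 * (1 - μ ^ 2) :=
    calc ‖l • w + (1 - l) • a i‖ ^ 2 ≤ ‖t • w + (1 - t) • a i‖ ^ 2 :=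
          pow_le_pow_left₀ (norm_nonneg _) (hmin ht) 2
      _ ≤ ‖w‖ ^ 2 - inner ℝ w (a i) ^ 2 := hbound
      _ ≤ ‖w‖ ^ 2 * (1 - μ ^ 2) := by nlinarith
  rw [← Real.sqrt_sq (norm_nonneg w), ← Real.sqrt_mul (sq_nonneg _)]
  exact Real.le_sqrt_of_sq_le hsq

/-- Linear convergence of one Von-Neumann–Gilbert step: if `w ∈ conv(A)` is a nonzero
point, `a i` a unit vector with `⟪w, a i⟫ ≤ -μ‖w‖` where `0 < μ ≤ 1`, then the point
of minimum norm on the segment `[w, a i]` has norm at most `‖w‖ √(1 − μ²)`. -/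
theorem stmt_18 {d n : ℕ} (hn : 0 < n) (a : Fin n → EuclideanSpace ℝ (Fin d))
    (ha : ∀ i, ‖a i‖ = 1)
    (μ : ℝ) (hμ0 : 0 < μ) (hμ1 : μ ≤ 1)
    (w : EuclideanSpace ℝ (Fin d)) (hw0 : w ≠ 0)
    (hwconv : w ∈ convexHull ℝ (Set.range a))
    (i : Fin n) (hi : (inner ℝ w (a i) : ℝ) ≤ -μ * ‖w‖) :
    ∃ l ∈ Set.Icc (0 : ℝ) 1,
      (∀ l' ∈ Set.Icc (0 : ℝ) 1, ‖l • w + (1 - l) • a i‖ ≤ ‖l' • w + (1 - l') • a i‖)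
      ∧ ‖l • w + (1 - l) • a i‖ ≤ ‖w‖ * Real.sqrt (1 - μ ^ 2) :=
  stmt_18_general a ha μ hμ0 w i hi
end
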